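/- Let p ∈ (2,6) and β = (p−2)/(6−p). There exists C_p > 0, depending only on p, such that for every star graph G with at least one half-line (m ≥ 1), every μ > 0 and every ground state u of mass μ on G, the Lagrange multiplier λ := μ^{-1}(‖u‖^p_{L^p(G)} − ‖u′‖²_{L²(G)}) satisfies C_p^{-1} μ^{2β} ≤ λ ≤ C_p μ^{2β}. -/

import Mathlib

open MeasureTheory Filter Set

noncomputable section

/-- `H1R p f f'` : `f : ℝ → ℝ` is an `H¹` function on `ℝ`, with weak derivative `f'`
(encoded via the absolutely continuous representative and the fundamental theorem
of calculus), and moreover `|f|^p` is integrable (so that the NLS energy is finite). -/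
def H1R (p : ℝ) (f f' : ℝ → ℝ) : Prop :=
  Continuous f ∧
  (∀ x y : ℝ, IntervalIntegrable f' volume x y) ∧
  (∀ x y : ℝ, f y = f x + ∫ t in x..y, f' t) ∧
  Integrable (fun x => (f x) ^ 2) ∧
  Integrable (fun x => |f x| ^ p) ∧
  Integrable (fun x => (f' x) ^ 2)

/-- The NLS energy `E(f, ℝ) = ½∫|f'|² − (1/p)∫|f|^p` on the line. -/
def energyR (p : ℝ) (f f' : ℝ → ℝ) : ℝ :=
  (1 / 2) * (∫ x, (f' x) ^ 2) - (1 / p) * ∫ x, |f x| ^ p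

/-- The ground-state energy level `E_ℝ(μ)` on the line. -/
def levelR (p μ : ℝ) : ℝ :=
  sInf { e | ∃ f f' : ℝ → ℝ, H1R p f f' ∧ (∫ x, (f x) ^ 2) = μ ∧ e = energyR p f f' }

/-- `H1HalfLine p f f'` : `f` is an `H¹` function on the half-line `[0, ∞)`,
with weak derivative `f'`. -/
def H1HalfLine (p : ℝ) (f f' : ℝ → ℝ) : Prop :=
  ContinuousOn f (Ici 0) ∧
  (∀ x y : ℝ, 0 ≤ x → 0 ≤ y → IntervalIntegrable f' volume x y) ∧
  (∀ x y : ℝ, 0 ≤ x → 0 ≤ y → f y = f x + ∫ t in x..y, f' t) ∧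
  IntegrableOn (fun x => (f x) ^ 2) (Ioi 0) ∧
  IntegrableOn (fun x => |f x| ^ p) (Ioi 0) ∧
  IntegrableOn (fun x => (f' x) ^ 2) (Ioi 0)

/-- The NLS energy on the half-line. -/
def energyHL (p : ℝ) (f f' : ℝ → ℝ) : ℝ :=
  (1 / 2) * (∫ x in Ioi (0:ℝ), (f' x) ^ 2) - (1 / p) * ∫ x in Ioi (0:ℝ), |f x| ^ p

/-- The ground-state energy level `E_{ℝ⁺}(μ)` on the half-line. -/
def levelHL (p μ : ℝ) : ℝ :=
  sInf { e | ∃ f f' : ℝ → ℝ, H1HalfLine p f f' ∧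
    (∫ x in Ioi (0:ℝ), (f x) ^ 2) = μ ∧ e = energyHL p f f' }

/-- `H1Edge p ℓ g g'` : `g` is an `H¹` function on the finite edge `[0, ℓ]`,
with weak derivative `g'`. -/
def H1Edge (p ℓ : ℝ) (g g' : ℝ → ℝ) : Prop :=
  ContinuousOn g (Icc 0 ℓ) ∧
  (∀ x ∈ Icc 0 ℓ, ∀ y ∈ Icc 0 ℓ, IntervalIntegrable g' volume x y) ∧
  (∀ x ∈ Icc 0 ℓ, ∀ y ∈ Icc 0 ℓ, g y = g x + ∫ t in x..y, g' t) ∧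
  IntegrableOn (fun x => (g x) ^ 2) (Ioo 0 ℓ) ∧
  IntegrableOn (fun x => |g x| ^ p) (Ioo 0 ℓ) ∧
  IntegrableOn (fun x => (g' x) ^ 2) (Ioo 0 ℓ)

/-- A star graph: `m` half-lines and `k` finite edges of lengths `ℓ j > 0`,
all emanating from a single vertex (sitting at coordinate `0` of every edge). -/
structure StarGraph where
  m : ℕ
  k : ℕ
  ℓ : Fin k → ℝ
  ℓ_pos : ∀ j, 0 < ℓ j

/-- A function on a star graph `G`, given by its components on the half-lines
(`f i`, for `i : Fin G.m`) and on the finite edges (`g j`, for `j : Fin G.k`),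
together with chosen (weak) derivatives `f' i`, `g' j`. -/
structure GraphFun (G : StarGraph) where
  f : Fin G.m → ℝ → ℝ
  f' : Fin G.m → ℝ → ℝ
  g : Fin G.k → ℝ → ℝ
  g' : Fin G.k → ℝ → ℝ

/-- Membership in `H¹(G)`: every component is `H¹` on its edge, and all components
agree at the common vertex. -/
def InH1G (p : ℝ) (G : StarGraph) (u : GraphFun G) : Prop :=
  (∀ i, H1HalfLine p (u.f i) (u.f' i)) ∧
  (∀ j, H1Edge p (G.ℓ j) (u.g j) (u.g' j)) ∧
  (∀ i i', u.f i 0 = u.f i' 0) ∧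
  (∀ i j, u.f i 0 = u.g j 0) ∧
  (∀ j j', u.g j 0 = u.g j' 0)

/-- `‖u‖²_{L²(G)}`, the (squared) mass of `u`. -/
def massG (G : StarGraph) (u : GraphFun G) : ℝ :=
  (∑ i, ∫ x in Ioi (0:ℝ), (u.f i x) ^ 2) + ∑ j, ∫ x in Ioo 0 (G.ℓ j), (u.g j x) ^ 2

/-- `‖u‖^p_{L^p(G)}`. -/
def lpG (p : ℝ) (G : StarGraph) (u : GraphFun G) : ℝ :=
  (∑ i, ∫ x in Ioi (0:ℝ), |u.f i x| ^ p) + ∑ j, ∫ x in Ioo 0 (G.ℓ j), |u.g j x| ^ p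

/-- `‖u'‖²_{L²(G)}`, the (squared) `L²` norm of the derivative. -/
def kinG (G : StarGraph) (u : GraphFun G) : ℝ :=
  (∑ i, ∫ x in Ioi (0:ℝ), (u.f' i x) ^ 2) + ∑ j, ∫ x in Ioo 0 (G.ℓ j), (u.g' j x) ^ 2

/-- The NLS energy `E(u, G) = ½‖u'‖²_{L²(G)} − (1/p)‖u‖^p_{L^p(G)}`. -/
def energyG (p : ℝ) (G : StarGraph) (u : GraphFun G) : ℝ :=
  (1 / 2) * kinG G u - (1 / p) * lpG p G u

/-- `‖u‖_{L^∞(G)}`: the supremum of `|u|` over the whole graph. -/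
def supNormG (G : StarGraph) (u : GraphFun G) : ℝ :=
  sSup ({ y | ∃ i : Fin G.m, ∃ x ≥ (0:ℝ), y = |u.f i x| } ∪
        { y | ∃ j : Fin G.k, ∃ x ∈ Icc 0 (G.ℓ j), y = |u.g j x| })

/-- The ground-state energy level `E_G(μ) = inf {E(u,G) : u ∈ H¹_μ(G)}`. -/
def levelG (p : ℝ) (G : StarGraph) (μ : ℝ) : ℝ :=
  sInf { e | ∃ u : GraphFun G, InH1G p G u ∧ massG G u = μ ∧ e = energyG p G u }

/-- `u` is a ground state of mass `μ` on `G`: it minimizes `E(·, G)` over `H¹_μ(G)`. -/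
def IsGroundState (p : ℝ) (G : StarGraph) (μ : ℝ) (u : GraphFun G) : Prop :=
  InH1G p G u ∧ massG G u = μ ∧
  ∀ v : GraphFun G, InH1G p G v → massG G v = μ → energyG p G u ≤ energyG p G v

/-- Weak `L²(s)` convergence of a sequence of functions, tested against
square-integrable functions on `s`. -/
def WeakL2On (s : Set ℝ) (h : ℕ → ℝ → ℝ) (h₀ : ℝ → ℝ) : Prop :=
  ∀ φ : ℝ → ℝ, IntegrableOn (fun x => (φ x) ^ 2) s →
    Tendsto (fun n => ∫ x in s, h n x * φ x) atTop (nhds (∫ x in s, h₀ x * φ x))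

/-- Componentwise difference of two functions on a star graph. -/
def GraphFun.sub {G : StarGraph} (u v : GraphFun G) : GraphFun G :=
  ⟨fun i x => u.f i x - v.f i x, fun i x => u.f' i x - v.f' i x,
   fun j x => u.g j x - v.g j x, fun j x => u.g' j x - v.g' j x⟩

/-- The star graph obtained from `G` by attaching one additional finite edge of
length `ε` at the vertex. -/
def StarGraph.addEdge (G : StarGraph) (ε : ℝ) (hε : 0 < ε) : StarGraph where
  m := G.m
  k := G.k + 1
  ℓ := Fin.cons ε G.ℓ
  ℓ_pos := by
    intro j
    refine Fin.cases ?_ ?_ j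
    · simpa using hε
    · intro i; simpa using G.ℓ_pos i

/-!
Lower bound: testing the minimality of `u` against `a x e^{-σx}` on one half-line, at the scale
`σ ∼ μ^β`, gives `E(u) ≤ -c μ^{1+2β}`, and `λμ = ‖u‖ᵖ_p - ‖u'‖²₂ = -2E(u) + (1 - 2/p)‖u‖ᵖ_p`.

Upper bound: every interval of length `L` contains a point where `u²` is at most its mass
over `L`, and by Cauchy–Schwarz `u` moves by at most `(L ‖u'‖²₂)^{1/2}` across it; this gives
`‖u‖²_∞ ≤ 8 (μ / L + L ‖u'‖²₂)` for every `L`, hence `‖u‖⁴_∞ ≤ 256 μ ‖u'‖²₂`. As `E(u) ≤ 0` forces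
`‖u'‖²₂ ≤ (2/p) ‖u‖ᵖ_p`, the bound `‖u‖ᵖ_p ≤ ‖u‖^{p-2}_∞ μ` becomes
`‖u‖ᵖ_p ≤ C μ^{1+θ} (‖u‖ᵖ_p)^θ` with `θ = (p-2)/4 < 1`, i.e. `λμ ≤ ‖u‖ᵖ_p ≤ C' μ^{1+2β}`.
-/

lemma setIntegral_sq_mono_set {f : ℝ → ℝ} {s t : Set ℝ} (hst : s ⊆ t)
    (hf : IntegrableOn (fun x => f x ^ 2) t) : ∫ x in s, f x ^ 2 ≤ ∫ x in t, f x ^ 2 :=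
  setIntegral_mono_set hf (ae_of_all _ fun x => sq_nonneg (f x)) hst.eventuallyLE

lemma sq_intervalIntegral_le_mul_integral_sq {g : ℝ → ℝ} {a b : ℝ} (hab : a ≤ b)
    (hg : IntervalIntegrable g volume a b) (hg2 : IntegrableOn (fun t => g t ^ 2) (Ioo a b)) :
    (∫ t in a..b, g t) ^ 2 ≤ (b - a) * ∫ t in Ioo a b, g t ^ 2 := by
  rcases hab.eq_or_lt with rfl | hlt
  · simp
  set A := ∫ t in a..b, g t
  set Q := ∫ t in Ioo a b, g t ^ 2
  have hQ : ∫ t in a..b, g t ^ 2 = Q := by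
    rw [intervalIntegral.integral_of_le hab, integral_Ioc_eq_integral_Ioo]
  -- integrate `2 c g - c² ≤ g²`, then take `c = A / (b - a)`
  have key : ∀ c : ℝ, 2 * c * A - c ^ 2 * (b - a) ≤ Q := by
    intro c
    have hmono : ∫ t in a..b, (2 * c * g t - c ^ 2) ≤ ∫ t in a..b, g t ^ 2 :=
      intervalIntegral.integral_mono_on hab ((hg.const_mul _).sub intervalIntegrable_const)
        ((intervalIntegrable_iff_integrableOn_Ioo_of_le hab).2 hg2)
        fun t _ => by nlinarith [sq_nonneg (g t - c)]
    rw [intervalIntegral.integral_sub (hg.const_mul _) intervalIntegrable_const,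
      intervalIntegral.integral_const_mul, intervalIntegral.integral_const, smul_eq_mul,
      hQ] at hmono
    linarith
  have hba : 0 < b - a := sub_pos.2 hlt
  have h := key (A / (b - a))
  rw [show 2 * (A / (b - a)) * A - (A / (b - a)) ^ 2 * (b - a) = A ^ 2 / (b - a) by
    field_simp; ring, div_le_iff₀ hba] at h
  linarith

lemma sq_intervalIntegral_le_of_mem_Icc {g : ℝ → ℝ} {c d x y : ℝ} (hx : x ∈ Icc c d)
    (hy : y ∈ Icc c d) (hg : IntervalIntegrable g volume c d)
    (hg2 : IntegrableOn (fun t => g t ^ 2) (Ioo c d)) :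
    (∫ t in y..x, g t) ^ 2 ≤ (d - c) * ∫ t in Ioo c d, g t ^ 2 := by
  wlog hyx : y ≤ x generalizing x y
  · rw [intervalIntegral.integral_symm, neg_sq]
    exact this hy hx (le_of_not_ge hyx)
  have hsub : Ioo y x ⊆ Ioo c d := Ioo_subset_Ioo hy.1 hx.2
  have hg' : IntervalIntegrable g volume y x := hg.mono_set <| by
    rw [uIcc_of_le hyx, uIcc_of_le (hy.1.trans hy.2)]
    exact Icc_subset_Icc hy.1 hx.2
  calc (∫ t in y..x, g t) ^ 2 ≤ (x - y) * ∫ t in Ioo y x, g t ^ 2 :=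
        sq_intervalIntegral_le_mul_integral_sq hyx hg' (hg2.mono_set hsub)
    _ ≤ (d - c) * ∫ t in Ioo c d, g t ^ 2 :=
        mul_le_mul (by linarith [hx.2, hy.1]) (setIntegral_sq_mono_set hsub hg2)
          (setIntegral_nonneg measurableSet_Ioo fun t _ => sq_nonneg _) (by linarith [hx.2, hy.1])

lemma exists_sq_le_integral_sq_div {f : ℝ → ℝ} {c d : ℝ} (hcd : c < d)
    (hf : ContinuousOn f (Icc c d)) (hf2 : IntegrableOn (fun x => f x ^ 2) (Ioo c d)) :
    ∃ y ∈ Icc c d, f y ^ 2 ≤ (∫ x in Ioo c d, f x ^ 2) / (d - c) := by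
  obtain ⟨y, hy, hmin⟩ := isCompact_Icc.exists_isMinOn (nonempty_Icc.2 hcd.le) (hf.pow 2)
  refine ⟨y, hy, (le_div_iff₀ (sub_pos.2 hcd)).2 ?_⟩
  calc f y ^ 2 * (d - c) = ∫ _ in Ioo c d, f y ^ 2 := by
        rw [setIntegral_const, Real.volume_real_Ioo_of_le hcd.le, smul_eq_mul, mul_comm]
    _ ≤ ∫ x in Ioo c d, f x ^ 2 :=
        setIntegral_mono_on (integrableOn_const measure_Ioo_lt_top.ne) hf2 measurableSet_Ioo
          fun x hx => hmin (Ioo_subset_Icc_self hx)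

lemma sq_le_of_forall_eq_add_integral {f f' : ℝ → ℝ} {c d : ℝ} (hcd : c < d)
    (hf : ContinuousOn f (Icc c d))
    (hftc : ∀ y ∈ Icc c d, ∀ x ∈ Icc c d, f x = f y + ∫ t in y..x, f' t)
    (hf' : IntervalIntegrable f' volume c d)
    (hf2 : IntegrableOn (fun x => f x ^ 2) (Ioo c d))
    (hf'2 : IntegrableOn (fun x => f' x ^ 2) (Ioo c d)) {x : ℝ} (hx : x ∈ Icc c d) :
    f x ^ 2 ≤
      2 * ((∫ t in Ioo c d, f t ^ 2) / (d - c)) + 2 * ((d - c) * ∫ t in Ioo c d, f' t ^ 2) := by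
  obtain ⟨y, hy, hfy⟩ := exists_sq_le_integral_sq_div hcd hf hf2
  have hincr := sq_intervalIntegral_le_of_mem_Icc hx hy hf' hf'2
  rw [hftc y hy x hx]
  nlinarith [sq_nonneg (f y - ∫ t in y..x, f' t)]

lemma sq_le_of_H1HalfLine {p : ℝ} {f f' : ℝ → ℝ} (hf : H1HalfLine p f f') {L x : ℝ}
    (hL : 0 < L) (hx : 0 ≤ x) :
    f x ^ 2 ≤ 2 * ((∫ t in Ioi 0, f t ^ 2) / L) + 2 * (L * ∫ t in Ioi 0, f' t ^ 2) := by
  obtain ⟨hcont, hint, hftc, hf2, -, hf'2⟩ := hf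
  have hIcc : Icc x (x + L) ⊆ Ici 0 := fun t ht => hx.trans ht.1
  have hIoo : Ioo x (x + L) ⊆ Ioi 0 := fun t ht => hx.trans_lt ht.1
  have hwin := sq_le_of_forall_eq_add_integral (by linarith) (hcont.mono hIcc)
    (fun a ha b hb => hftc a b (hIcc ha) (hIcc hb)) (hint x (x + L) hx (by linarith))
    (hf2.mono_set hIoo) (hf'2.mono_set hIoo) (left_mem_Icc.2 (by linarith))
  rw [add_sub_cancel_left] at hwin
  have hmass := setIntegral_sq_mono_set hIoo hf2
  have hkin := setIntegral_sq_mono_set hIoo hf'2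
  refine hwin.trans ?_
  gcongr

lemma sq_le_of_H1Edge_of_le {p ℓ : ℝ} {g g' : ℝ → ℝ} (hg : H1Edge p ℓ g g') {L x : ℝ}
    (hL : 0 < L) (hLℓ : L ≤ ℓ) (hx : x ∈ Icc 0 ℓ) :
    g x ^ 2 ≤
      2 * ((∫ t in Ioo 0 ℓ, g t ^ 2) / L) + 2 * (L * ∫ t in Ioo 0 ℓ, g' t ^ 2) := by
  obtain ⟨hcont, hint, hftc, hg2, -, hg'2⟩ := hg
  set c := min x (ℓ - L)
  have hc : 0 ≤ c := le_min hx.1 (by linarith)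
  have hcL : c + L ≤ ℓ := by linarith [min_le_right x (ℓ - L)]
  have hxc : x ∈ Icc c (c + L) :=
    ⟨min_le_left _ _, by
      rcases min_choice x (ℓ - L) with h | h <;> simp only [c, h] <;> linarith [hx.2]⟩
  have hIcc : Icc c (c + L) ⊆ Icc 0 ℓ := Icc_subset_Icc hc hcL
  have hIoo : Ioo c (c + L) ⊆ Ioo 0 ℓ := Ioo_subset_Ioo hc hcL
  have hwin := sq_le_of_forall_eq_add_integral (by linarith) (hcont.mono hIcc)
    (fun a ha b hb => hftc a (hIcc ha) b (hIcc hb))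
    (hint c (hIcc (left_mem_Icc.2 (by linarith))) (c + L) (hIcc (right_mem_Icc.2 (by linarith))))
    (hg2.mono_set hIoo) (hg'2.mono_set hIoo) hxc
  rw [add_sub_cancel_left] at hwin
  have hmass := setIntegral_sq_mono_set hIoo hg2
  have hkin := setIntegral_sq_mono_set hIoo hg'2
  refine hwin.trans ?_
  gcongr

lemma sq_le_of_H1Edge {p ℓ : ℝ} {g g' : ℝ → ℝ} (hg : H1Edge p ℓ g g') {x : ℝ}
    (hx : x ∈ Icc 0 ℓ) :
    g x ^ 2 ≤ 2 * g 0 ^ 2 + 2 * (ℓ * ∫ t in Ioo 0 ℓ, g' t ^ 2) := by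
  obtain ⟨-, hint, hftc, -, -, hg'2⟩ := hg
  have h0 : (0 : ℝ) ∈ Icc 0 ℓ := left_mem_Icc.2 (hx.1.trans hx.2)
  have hincr := sq_intervalIntegral_le_of_mem_Icc hx h0 (hint 0 h0 ℓ (right_mem_Icc.2 h0.2)) hg'2
  rw [sub_zero] at hincr
  rw [hftc 0 h0 x hx]
  nlinarith [sq_nonneg (g 0 - ∫ t in (0 : ℝ)..x, g' t)]

lemma le_sum_add_sum_left {ι κ : Type*} [Fintype ι] [Fintype κ] {F : ι → ℝ}
    {H : κ → ℝ} (hF : ∀ i, 0 ≤ F i) (hH : ∀ j, 0 ≤ H j) (i : ι) :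
    F i ≤ ∑ i, F i + ∑ j, H j :=
  le_add_of_le_of_nonneg (Finset.single_le_sum (fun i _ => hF i) (Finset.mem_univ i))
    (Finset.sum_nonneg fun j _ => hH j)

lemma le_sum_add_sum_right {ι κ : Type*} [Fintype ι] [Fintype κ] {F : ι → ℝ}
    {H : κ → ℝ} (hF : ∀ i, 0 ≤ F i) (hH : ∀ j, 0 ≤ H j) (j : κ) :
    H j ≤ ∑ i, F i + ∑ j, H j :=
  le_add_of_nonneg_of_le (Finset.sum_nonneg fun i _ => hF i)
    (Finset.single_le_sum (fun j _ => hH j) (Finset.mem_univ j))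

lemma setIntegral_sq_nonneg (f : ℝ → ℝ) {s : Set ℝ} (hs : MeasurableSet s) :
    0 ≤ ∫ x in s, f x ^ 2 :=
  setIntegral_nonneg hs fun x _ => sq_nonneg (f x)

section StarGraph

variable {G : StarGraph}

lemma massG_nonneg (u : GraphFun G) : 0 ≤ massG G u :=
  add_nonneg (Finset.sum_nonneg fun _ _ => setIntegral_sq_nonneg _ measurableSet_Ioi)
    (Finset.sum_nonneg fun _ _ => setIntegral_sq_nonneg _ measurableSet_Ioo)

lemma kinG_nonneg (u : GraphFun G) : 0 ≤ kinG G u :=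
  add_nonneg (Finset.sum_nonneg fun _ _ => setIntegral_sq_nonneg _ measurableSet_Ioi)
    (Finset.sum_nonneg fun _ _ => setIntegral_sq_nonneg _ measurableSet_Ioo)

lemma lpG_nonneg (p : ℝ) (u : GraphFun G) : 0 ≤ lpG p G u :=
  add_nonneg
    (Finset.sum_nonneg fun _ _ => setIntegral_nonneg measurableSet_Ioi fun _ _ => by positivity)
    (Finset.sum_nonneg fun _ _ => setIntegral_nonneg measurableSet_Ioo fun _ _ => by positivity)

lemma integral_sq_halfLine_le_massG (u : GraphFun G) (i : Fin G.m) :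
    ∫ x in Ioi 0, u.f i x ^ 2 ≤ massG G u :=
  le_sum_add_sum_left (fun _ => setIntegral_sq_nonneg _ measurableSet_Ioi)
    (fun _ => setIntegral_sq_nonneg _ measurableSet_Ioo) i

lemma integral_sq_edge_le_massG (u : GraphFun G) (j : Fin G.k) :
    ∫ x in Ioo 0 (G.ℓ j), u.g j x ^ 2 ≤ massG G u :=
  le_sum_add_sum_right (fun _ => setIntegral_sq_nonneg _ measurableSet_Ioi)
    (fun _ => setIntegral_sq_nonneg _ measurableSet_Ioo) j

lemma integral_sq_halfLine_le_kinG (u : GraphFun G) (i : Fin G.m) :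
    ∫ x in Ioi 0, u.f' i x ^ 2 ≤ kinG G u :=
  le_sum_add_sum_left (fun _ => setIntegral_sq_nonneg _ measurableSet_Ioi)
    (fun _ => setIntegral_sq_nonneg _ measurableSet_Ioo) i

lemma integral_sq_edge_le_kinG (u : GraphFun G) (j : Fin G.k) :
    ∫ x in Ioo 0 (G.ℓ j), u.g' j x ^ 2 ≤ kinG G u :=
  le_sum_add_sum_right (fun _ => setIntegral_sq_nonneg _ measurableSet_Ioi)
    (fun _ => setIntegral_sq_nonneg _ measurableSet_Ioo) j

/-- The vertex value is controlled through the half-line `i₀`; an edge shorter than `L` is then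
controlled from the vertex, a longer one by a window of length `L` inside it. -/
lemma sq_le_of_InH1G {p : ℝ} {u : GraphFun G} (hu : InH1G p G u) (i₀ : Fin G.m) {L : ℝ}
    (hL : 0 < L) :
    (∀ i, ∀ x, 0 ≤ x → u.f i x ^ 2 ≤ 8 * massG G u / L + L * (8 * kinG G u)) ∧
    (∀ j, ∀ x ∈ Icc 0 (G.ℓ j), u.g j x ^ 2 ≤ 8 * massG G u / L + L * (8 * kinG G u)) := by
  obtain ⟨hf, hg, -, hfg, -⟩ := hu
  have hμ := div_nonneg (massG_nonneg u) hL.le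
  have hK := mul_nonneg hL.le (kinG_nonneg u)
  have halfLine :
      ∀ i, ∀ x, 0 ≤ x → u.f i x ^ 2 ≤ 2 * (massG G u / L) + 2 * (L * kinG G u) := by
    intro i x hx
    refine (sq_le_of_H1HalfLine (hf i) hL hx).trans ?_
    gcongr
    exacts [integral_sq_halfLine_le_massG u i, integral_sq_halfLine_le_kinG u i]
  refine ⟨fun i x hx => (halfLine i x hx).trans (by linarith [mul_div_assoc 8 (massG G u) L]),
    fun j x hx => ?_⟩
  have hkin := integral_sq_edge_le_kinG u j
  rcases le_total L (G.ℓ j) with hLℓ | hℓL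
  · have hmass := integral_sq_edge_le_massG u j
    calc u.g j x ^ 2 ≤ _ := sq_le_of_H1Edge_of_le (hg j) hL hLℓ hx
      _ ≤ 2 * (massG G u / L) + 2 * (L * kinG G u) := by gcongr
      _ ≤ _ := by linarith [mul_div_assoc 8 (massG G u) L]
  · have hvertex := halfLine i₀ 0 le_rfl
    rw [hfg i₀ j] at hvertex
    refine (sq_le_of_H1Edge (hg j) hx).trans ?_
    have : G.ℓ j * ∫ t in Ioo 0 (G.ℓ j), u.g' j t ^ 2 ≤ L * kinG G u :=
      mul_le_mul hℓL hkin (setIntegral_sq_nonneg _ measurableSet_Ioo) hL.le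
    linarith [mul_div_assoc 8 (massG G u) L]

end StarGraph

lemma sq_le_four_mul_of_forall_le_div_add_mul {a b B : ℝ} (ha : 0 ≤ a) (hb : 0 ≤ b)
    (hB : 0 ≤ B) (h : ∀ L > 0, B ≤ a / L + L * b) : B ^ 2 ≤ 4 * a * b := by
  rcases hB.eq_or_lt with rfl | hB
  · rw [zero_pow two_ne_zero]
    positivity
  rcases hb.eq_or_lt with rfl | hb
  · have := h (2 * (a + 1) / B) (by positivity)
    rw [mul_zero, add_zero, div_div_eq_mul_div, le_div_iff₀ (by positivity)] at this
    nlinarith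
  · have := h (B / (2 * b)) (by positivity)
    rw [div_div_eq_mul_div, div_mul_eq_mul_div, div_add_div _ _ hB.ne' (by positivity),
      le_div_iff₀ (by positivity)] at this
    nlinarith

lemma abs_rpow_le_of_pow_four_le {p v B : ℝ} (hp : 2 ≤ p) (h : v ^ 4 ≤ B) :
    |v| ^ p ≤ B ^ ((p - 2) / 4) * v ^ 2 := by
  rcases eq_or_ne v 0 with rfl | hv
  · rw [abs_zero, Real.zero_rpow (by linarith)]
    positivity
  have hv' : 0 < |v| := abs_pos.2 hv
  have hsplit : |v| ^ p = (|v| ^ 4) ^ ((p - 2) / 4) * v ^ 2 := by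
    rw [← Real.rpow_natCast, ← Real.rpow_mul hv'.le, ← sq_abs, ← Real.rpow_natCast (|v|) 2,
      ← Real.rpow_add hv']
    ring_nf
  rw [hsplit, pow_abs, abs_of_nonneg (by positivity)]
  gcongr

lemma lpG_le_of_forall_pow_four_le {p : ℝ} (hp : 2 ≤ p) {G : StarGraph} {u : GraphFun G}
    (hu : InH1G p G u) {B : ℝ}
    (hf : ∀ i, ∀ x, 0 ≤ x → u.f i x ^ 4 ≤ B)
    (hg : ∀ j, ∀ x ∈ Icc 0 (G.ℓ j), u.g j x ^ 4 ≤ B) :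
    lpG p G u ≤ B ^ ((p - 2) / 4) * massG G u := by
  rw [lpG, massG, mul_add, Finset.mul_sum, Finset.mul_sum]
  gcongr with i _ j _
  · rw [← integral_const_mul]
    exact setIntegral_mono_on (hu.1 i).2.2.2.2.1 ((hu.1 i).2.2.2.1.const_mul _) measurableSet_Ioi
      fun x hx => abs_rpow_le_of_pow_four_le hp (hf i x (le_of_lt hx))
  · rw [← integral_const_mul]
    exact setIntegral_mono_on (hu.2.1 j).2.2.2.2.1 ((hu.2.1 j).2.2.2.1.const_mul _)
      measurableSet_Ioo fun x hx => abs_rpow_le_of_pow_four_le hp (hg j x (Ioo_subset_Icc_self hx))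

lemma lpG_le_gagliardoNirenberg {p : ℝ} (hp : 2 ≤ p) {G : StarGraph} (hm : 1 ≤ G.m)
    {u : GraphFun G} (hu : InH1G p G u) :
    lpG p G u ≤ (256 * massG G u * kinG G u) ^ ((p - 2) / 4) * massG G u := by
  have hbound := fun L (hL : 0 < L) => sq_le_of_InH1G hu ⟨0, hm⟩ hL
  have hfour : ∀ v : ℝ, (∀ L > 0, v ^ 2 ≤ 8 * massG G u / L + L * (8 * kinG G u)) →
      v ^ 4 ≤ 256 * massG G u * kinG G u := fun v hv => by
    have := sq_le_four_mul_of_forall_le_div_add_mul (by linarith [massG_nonneg u])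
      (by linarith [kinG_nonneg u]) (sq_nonneg v) hv
    linarith
  exact lpG_le_of_forall_pow_four_le hp hu
    (fun i x hx => hfour _ fun L hL => (hbound L hL).1 i x hx)
    (fun j x hx => hfour _ fun L hL => (hbound L hL).2 j x hx)

lemma le_rpow_of_le_mul_rpow {x c θ : ℝ} (hx : 0 ≤ x) (hc : 0 ≤ c) (hθ : θ < 1)
    (h : x ≤ c * x ^ θ) : x ≤ c ^ (1 - θ)⁻¹ := by
  rcases hx.eq_or_lt with rfl | hx
  · positivity
  have hxθ : x ^ (1 - θ) ≤ c := by
    rwa [Real.rpow_sub hx, Real.rpow_one, div_le_iff₀ (by positivity)]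
  calc x = (x ^ (1 - θ)) ^ (1 - θ)⁻¹ := by
        rw [← Real.rpow_mul hx.le, mul_inv_cancel₀ (by linarith), Real.rpow_one]
    _ ≤ c ^ (1 - θ)⁻¹ := by gcongr

lemma lpG_le_of_energyG_nonpos {p : ℝ} (hp₁ : 2 < p) (hp₂ : p < 6) {G : StarGraph}
    (hm : 1 ≤ G.m) {u : GraphFun G} (hu : InH1G p G u) (hE : energyG p G u ≤ 0) :
    lpG p G u ≤ (512 / p) ^ ((p - 2) / (6 - p)) * massG G u ^ (1 + 2 * ((p - 2) / (6 - p))) := by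
  set μ := massG G u
  set P := lpG p G u
  set θ := (p - 2) / 4
  have hμ : 0 ≤ μ := massG_nonneg u
  have hP : 0 ≤ P := lpG_nonneg p u
  have hK : 256 * μ * kinG G u ≤ 512 / p * μ * P := by
    rw [energyG, sub_nonpos] at hE
    calc 256 * μ * kinG G u = 512 * μ * (1 / 2 * kinG G u) := by ring
      _ ≤ 512 * μ * (1 / p * P) := by gcongr
      _ = 512 / p * μ * P := by ring
  have hself : P ≤ ((512 / p) ^ θ * μ ^ (θ + 1)) * P ^ θ :=
    calc P ≤ (256 * μ * kinG G u) ^ θ * μ := lpG_le_gagliardoNirenberg hp₁.le hm hu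
      _ ≤ (512 / p * μ * P) ^ θ * μ := by
          gcongr
          exact mul_nonneg (by positivity) (kinG_nonneg u)
      _ = _ := by
          rw [Real.mul_rpow (by positivity) hP, Real.mul_rpow (by positivity) hμ,
            Real.rpow_add' hμ (by positivity), Real.rpow_one]
          ring
  have hθ : 1 - θ = (6 - p) / 4 := by ring
  refine (le_rpow_of_le_mul_rpow hP (by positivity) (by linarith) hself).trans_eq ?_
  rw [Real.mul_rpow (by positivity) (by positivity), ← Real.rpow_mul (by positivity),
    ← Real.rpow_mul hμ]
  have h6 : 6 - p ≠ 0 := by linarith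
  congr 2 <;> rw [hθ] <;> field_simp <;> ring

lemma integral_rpow_mul_exp_neg_mul_Ioi' {s b : ℝ} (hs : -1 < s) (hb : 0 < b) :
    ∫ x in Ioi 0, x ^ s * Real.exp (-(b * x)) = Real.Gamma (s + 1) / b ^ (s + 1) := by
  have := Real.integral_rpow_mul_exp_neg_mul_Ioi (a := s + 1) (by linarith) hb
  rw [add_sub_cancel_right] at this
  rw [this, one_div, Real.inv_rpow hb.le, inv_mul_eq_div]

lemma integrableOn_rpow_mul_exp_neg_mul_Ioi {s b : ℝ} (hs : -1 < s) (hb : 0 < b) :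
    IntegrableOn (fun x => x ^ s * Real.exp (-(b * x))) (Ioi 0) :=
  Integrable.of_integral_ne_zero <| by
    rw [integral_rpow_mul_exp_neg_mul_Ioi' hs hb]
    exact (div_pos (Real.Gamma_pos_of_pos (by linarith)) (by positivity)).ne'

lemma integral_pow_mul_exp_neg_mul_Ioi (n : ℕ) {b : ℝ} (hb : 0 < b) :
    ∫ x in Ioi 0, x ^ n * Real.exp (-(b * x)) = n.factorial / b ^ (n + 1) := by
  have := integral_rpow_mul_exp_neg_mul_Ioi' (s := n) (by linarith [n.cast_nonneg (α := ℝ)]) hb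
  simp only [Real.rpow_natCast] at this
  rw [this, Real.Gamma_nat_eq_factorial, ← Nat.cast_add_one, Real.rpow_natCast]

lemma integrableOn_pow_mul_exp_neg_mul_Ioi (n : ℕ) {b : ℝ} (hb : 0 < b) :
    IntegrableOn (fun x => x ^ n * Real.exp (-(b * x))) (Ioi 0) := by
  simpa only [Real.rpow_natCast] using
    integrableOn_rpow_mul_exp_neg_mul_Ioi (s := n) (by linarith [n.cast_nonneg (α := ℝ)]) hb

def trialProfile (a σ x : ℝ) : ℝ := a * x * Real.exp (-(σ * x))

def trialProfileDeriv (a σ x : ℝ) : ℝ := a * (1 - σ * x) * Real.exp (-(σ * x))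

section TrialProfile

variable {a σ : ℝ}

lemma hasDerivAt_trialProfile (a σ x : ℝ) :
    HasDerivAt (trialProfile a σ) (trialProfileDeriv a σ x) x := by
  have hlin : HasDerivAt (fun x => a * x) a x := by simpa using (hasDerivAt_id x).const_mul a
  have hexp : HasDerivAt (fun x => Real.exp (-(σ * x))) (Real.exp (-(σ * x)) * -σ) x := by
    simpa using ((hasDerivAt_id x).const_mul σ).neg.exp
  exact (hlin.mul hexp).congr_deriv (by rw [trialProfileDeriv]; ring)

lemma continuous_trialProfileDeriv (a σ : ℝ) : Continuous (trialProfileDeriv a σ) := by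
  show Continuous fun x => a * (1 - σ * x) * Real.exp (-(σ * x))
  fun_prop

lemma trialProfile_sq (a σ x : ℝ) :
    trialProfile a σ x ^ 2 = a ^ 2 * (x ^ 2 * Real.exp (-(2 * σ * x))) := by
  rw [trialProfile, mul_pow, mul_pow, ← Real.exp_nat_mul]
  ring_nf

lemma trialProfileDeriv_sq (a σ x : ℝ) :
    trialProfileDeriv a σ x ^ 2 = a ^ 2 * (x ^ 0 * Real.exp (-(2 * σ * x)))
      - 2 * σ * a ^ 2 * (x ^ 1 * Real.exp (-(2 * σ * x)))
      + σ ^ 2 * a ^ 2 * (x ^ 2 * Real.exp (-(2 * σ * x))) := by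
  rw [trialProfileDeriv, mul_pow, mul_pow, ← Real.exp_nat_mul]
  ring_nf

lemma abs_trialProfile_rpow {p : ℝ} (ha : 0 ≤ a) {x : ℝ} (hx : 0 < x) :
    |trialProfile a σ x| ^ p = a ^ p * (x ^ p * Real.exp (-(p * σ * x))) := by
  rw [trialProfile, abs_of_nonneg (by positivity), Real.mul_rpow (by positivity) (by positivity),
    Real.mul_rpow ha hx.le, ← Real.exp_mul]
  ring_nf

variable (hσ : 0 < σ)
include hσ

lemma integral_trialProfile_sq :
    ∫ x in Ioi 0, trialProfile a σ x ^ 2 = a ^ 2 / (4 * σ ^ 3) := by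
  simp_rw [trialProfile_sq]
  rw [integral_const_mul, integral_pow_mul_exp_neg_mul_Ioi 2 (by positivity)]
  norm_num [Nat.factorial]
  field_simp
  ring

lemma integral_trialProfileDeriv_sq :
    ∫ x in Ioi 0, trialProfileDeriv a σ x ^ 2 = a ^ 2 / (4 * σ) := by
  have hb : 0 < 2 * σ := by positivity
  have hint := fun n => integrableOn_pow_mul_exp_neg_mul_Ioi n hb
  simp_rw [trialProfileDeriv_sq]
  rw [integral_add, integral_sub, integral_const_mul, integral_const_mul, integral_const_mul,
    integral_pow_mul_exp_neg_mul_Ioi 0 hb, integral_pow_mul_exp_neg_mul_Ioi 1 hb,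
    integral_pow_mul_exp_neg_mul_Ioi 2 hb]
  · norm_num [Nat.factorial]
    field_simp
    ring
  exacts [(hint 0).const_mul _, (hint 1).const_mul _,
    ((hint 0).const_mul _).sub ((hint 1).const_mul _), (hint 2).const_mul _]

lemma integral_abs_trialProfile_rpow {p : ℝ} (hp : 0 < p) (ha : 0 ≤ a) :
    ∫ x in Ioi 0, |trialProfile a σ x| ^ p =
      a ^ p * (Real.Gamma (p + 1) / (p * σ) ^ (p + 1)) := by
  rw [setIntegral_congr_fun measurableSet_Ioi fun x hx => abs_trialProfile_rpow ha hx,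
    integral_const_mul, integral_rpow_mul_exp_neg_mul_Ioi' (by linarith) (by positivity)]

lemma H1HalfLine_trialProfile {p : ℝ} (hp : 0 < p) (ha : 0 ≤ a) :
    H1HalfLine p (trialProfile a σ) (trialProfileDeriv a σ) := by
  refine ⟨fun x _ => (hasDerivAt_trialProfile a σ x).continuousAt.continuousWithinAt,
    fun x y _ _ => (continuous_trialProfileDeriv a σ).intervalIntegrable x y,
    fun x y _ _ => ?_, ?_, ?_, ?_⟩
  · rw [intervalIntegral.integral_eq_sub_of_hasDerivAt (fun t _ => hasDerivAt_trialProfile a σ t)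
      ((continuous_trialProfileDeriv a σ).intervalIntegrable x y)]
    ring
  · simp_rw [trialProfile_sq]
    exact (integrableOn_pow_mul_exp_neg_mul_Ioi 2 (by positivity)).const_mul _
  · refine IntegrableOn.congr_fun ?_ (fun x hx => (abs_trialProfile_rpow ha hx).symm)
      measurableSet_Ioi
    exact (integrableOn_rpow_mul_exp_neg_mul_Ioi (by linarith) (by positivity)).const_mul _
  · have hint := fun n => integrableOn_pow_mul_exp_neg_mul_Ioi n (by positivity : 0 < 2 * σ)
    simp_rw [trialProfileDeriv_sq]
    exact (((hint 0).const_mul _).sub ((hint 1).const_mul _)).add ((hint 2).const_mul _)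

end TrialProfile

lemma H1HalfLine_zero {p : ℝ} (hp : p ≠ 0) : H1HalfLine p 0 0 := by
  refine ⟨continuousOn_const, fun _ _ _ _ => intervalIntegrable_const, fun _ _ _ _ => by simp,
    ?_, ?_, ?_⟩ <;> simp [Real.zero_rpow hp]

lemma H1Edge_zero {p : ℝ} (hp : p ≠ 0) (ℓ : ℝ) : H1Edge p ℓ 0 0 := by
  refine ⟨continuousOn_const, fun _ _ _ _ => intervalIntegrable_const, fun _ _ _ _ => by simp,
    ?_, ?_, ?_⟩ <;> simp [Real.zero_rpow hp]

lemma sum_apply_single {ι M : Type*} [Fintype ι] [DecidableEq ι] [Zero M] {F : M → ℝ}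
    (hF : F 0 = 0) (i₀ : ι) (φ : M) : ∑ i, F ((Pi.single i₀ φ : ι → M) i) = F φ := by
  rw [Fintype.sum_eq_single i₀ fun i hi => by rw [Pi.single_eq_of_ne hi, hF], Pi.single_eq_same]

def trialFun (G : StarGraph) (i₀ : Fin G.m) (a σ : ℝ) : GraphFun G where
  f := Pi.single i₀ (trialProfile a σ)
  f' := Pi.single i₀ (trialProfileDeriv a σ)
  g := 0
  g' := 0

section TrialFun

variable {G : StarGraph} (i₀ : Fin G.m) {a σ : ℝ}

lemma InH1G_trialFun {p : ℝ} (hp : 0 < p) (ha : 0 ≤ a) (hσ : 0 < σ) :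
    InH1G p G (trialFun G i₀ a σ) := by
  have hvertex : ∀ i, (trialFun G i₀ a σ).f i 0 = 0 := fun i => by
    rcases eq_or_ne i i₀ with rfl | hi
    · simp [trialFun, trialProfile]
    · simp [trialFun, Pi.single_eq_of_ne hi]
  refine ⟨fun i => ?_, fun j => H1Edge_zero hp.ne' _, fun i i' => ?_, fun i j => ?_,
    fun _ _ => rfl⟩
  · rcases eq_or_ne i i₀ with rfl | hi
    · simpa [trialFun] using H1HalfLine_trialProfile hσ hp ha
    · simpa [trialFun, Pi.single_eq_of_ne hi] using H1HalfLine_zero hp.ne'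
  · rw [hvertex, hvertex]
  · rw [hvertex]
    rfl

lemma massG_trialFun (hσ : 0 < σ) : massG G (trialFun G i₀ a σ) = a ^ 2 / (4 * σ ^ 3) := by
  simp only [massG, trialFun]
  rw [sum_apply_single (F := fun φ : ℝ → ℝ => ∫ x in Ioi 0, φ x ^ 2) (by simp),
    integral_trialProfile_sq hσ]
  simp

lemma kinG_trialFun (hσ : 0 < σ) : kinG G (trialFun G i₀ a σ) = a ^ 2 / (4 * σ) := by
  simp only [kinG, trialFun]
  rw [sum_apply_single (F := fun φ : ℝ → ℝ => ∫ x in Ioi 0, φ x ^ 2) (by simp),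
    integral_trialProfileDeriv_sq hσ]
  simp

lemma lpG_trialFun {p : ℝ} (hp : 0 < p) (ha : 0 ≤ a) (hσ : 0 < σ) :
    lpG p G (trialFun G i₀ a σ) = a ^ p * (Real.Gamma (p + 1) / (p * σ) ^ (p + 1)) := by
  simp only [lpG, trialFun]
  rw [sum_apply_single (F := fun φ : ℝ → ℝ => ∫ x in Ioi 0, |φ x| ^ p)
      (by simp [Real.zero_rpow hp.ne']),
    integral_abs_trialProfile_rpow hσ hp ha]
  simp [Real.zero_rpow hp.ne']

end TrialFun

/-- For `σ = trialScale p * μ ^ β` and `a² = 4μσ³` (mass `μ`), the trial function `v` has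
`‖v'‖²₂ = (1/p) ‖v‖ᵖ_p = trialScale p ^ 2 * μ ^ (1 + 2β)`. -/
def trialScale (p : ℝ) : ℝ := (2 ^ p * Real.Gamma (p + 1) / p ^ (p + 2)) ^ (2 / (6 - p))

lemma trialScale_pos {p : ℝ} (hp : 0 < p) : 0 < trialScale p := by
  have := Real.Gamma_pos_of_pos (by linarith : 0 < p + 1)
  unfold trialScale
  positivity

section TrialEnergy

variable {p μ σ a : ℝ} (hp₁ : 2 < p) (hp₂ : p < 6) (hμ : 0 < μ)
  (hσ : σ = trialScale p * μ ^ ((p - 2) / (6 - p)))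
include hp₁ hp₂ hμ hσ

lemma one_div_mul_lpG_trialFun {G : StarGraph} (i₀ : Fin G.m) (ha : 0 < a)
    (ha2 : a ^ 2 = 4 * (μ * σ ^ 3)) :
    1 / p * lpG p G (trialFun G i₀ a σ) =
      trialScale p ^ 2 * μ ^ (1 + 2 * ((p - 2) / (6 - p))) := by
  have hp : 0 < p := by linarith
  have hΓ : 0 < Real.Gamma (p + 1) := Real.Gamma_pos_of_pos (by linarith)
  have hs : 0 < trialScale p := trialScale_pos hp
  have hσ0 : 0 < σ := hσ ▸ by positivity
  rw [lpG_trialFun i₀ hp ha.le hσ0]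
  refine Real.log_injOn_pos (by simp only [mem_Ioi]; positivity)
    (by simp only [mem_Ioi]; positivity) ?_
  have hloga : Real.log a = (2 * Real.log 2 + Real.log μ + 3 * Real.log σ) / 2 := by
    have h := congrArg Real.log ha2
    rw [Real.log_pow, Real.log_mul (by norm_num) (by positivity),
      Real.log_mul hμ.ne' (by positivity), Real.log_pow,
      show (4 : ℝ) = 2 ^ 2 by norm_num, Real.log_pow] at h
    push_cast at h
    linarith
  have hlogσ : Real.log σ = Real.log (trialScale p) + (p - 2) / (6 - p) * Real.log μ := by
    rw [hσ, Real.log_mul hs.ne' (by positivity), Real.log_rpow hμ]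
  have hlogs : Real.log (trialScale p) =
      2 / (6 - p) * (p * Real.log 2 + Real.log (Real.Gamma (p + 1)) - (p + 2) * Real.log p) := by
    rw [trialScale, Real.log_rpow (by positivity), Real.log_div (by positivity) (by positivity),
      Real.log_mul (by positivity) hΓ.ne', Real.log_rpow two_pos, Real.log_rpow hp]
  rw [Real.log_mul (by positivity) (by positivity), Real.log_mul (by positivity) (by positivity),
    Real.log_div hΓ.ne' (by positivity), Real.log_rpow ha, Real.log_rpow (by positivity),
    Real.log_mul hp.ne' hσ0.ne', Real.log_mul (by positivity) (by positivity), Real.log_pow,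
    Real.log_rpow hμ, one_div, Real.log_inv, hloga, hlogσ, hlogs]
  have h6 : 6 - p ≠ 0 := by linarith
  field_simp
  ring

lemma energyG_trialFun {G : StarGraph} (i₀ : Fin G.m) (ha : 0 < a)
    (ha2 : a ^ 2 = 4 * (μ * σ ^ 3)) :
    energyG p G (trialFun G i₀ a σ) =
      -(trialScale p ^ 2 / 2) * μ ^ (1 + 2 * ((p - 2) / (6 - p))) := by
  have hσ0 : 0 < σ := hσ ▸ mul_pos (trialScale_pos (by linarith)) (by positivity)
  have hkin :
      kinG G (trialFun G i₀ a σ) = trialScale p ^ 2 * μ ^ (1 + 2 * ((p - 2) / (6 - p))) := by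
    rw [kinG_trialFun i₀ hσ0, ha2, Real.rpow_add hμ, Real.rpow_one, mul_comm 2,
      Real.rpow_mul hμ.le, Real.rpow_ofNat, hσ]
    field_simp
  rw [energyG, hkin, one_div_mul_lpG_trialFun hp₁ hp₂ hμ hσ i₀ ha ha2]
  ring

end TrialEnergy

lemma energyG_le_of_isGroundState {p : ℝ} (hp₁ : 2 < p) (hp₂ : p < 6) {G : StarGraph}
    (hm : 1 ≤ G.m) {μ : ℝ} (hμ : 0 < μ) {u : GraphFun G} (hu : IsGroundState p G μ u) :
    energyG p G u ≤ -(trialScale p ^ 2 / 2) * μ ^ (1 + 2 * ((p - 2) / (6 - p))) := by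
  set σ := trialScale p * μ ^ ((p - 2) / (6 - p))
  have hσ : 0 < σ := mul_pos (trialScale_pos (by linarith)) (by positivity)
  set a := 2 * √(μ * σ ^ 3)
  have ha2 : a ^ 2 = 4 * (μ * σ ^ 3) := by
    rw [mul_pow, Real.sq_sqrt (by positivity)]
    norm_num
  have hmass : massG G (trialFun G ⟨0, hm⟩ a σ) = μ := by
    rw [massG_trialFun _ hσ, ha2]
    field_simp
  calc energyG p G u ≤ energyG p G (trialFun G ⟨0, hm⟩ a σ) :=
        hu.2.2 _ (InH1G_trialFun _ (by linarith) (by positivity) hσ) hmass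
    _ = _ := energyG_trialFun hp₁ hp₂ hμ rfl ⟨0, hm⟩ (by positivity) ha2

/-- Corollary 2.8, estimate (20): there is `C_p > 0`, depending only
on `p ∈ (2,6)`, such that for every star graph `G` with at least one half-line, every
`μ > 0` and every ground state `u` of mass `μ`, the Lagrange multiplier
`λ = μ⁻¹(‖u‖^p_{L^p} − ‖u'‖²_{L²})` satisfies `C⁻¹ μ^{2β} ≤ λ ≤ C μ^{2β}`. -/
theorem lagrange_multiplier_estimate (p : ℝ) (hp₁ : 2 < p) (hp₂ : p < 6) :
    ∃ C : ℝ, 0 < C ∧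
      ∀ G : StarGraph, 1 ≤ G.m → ∀ μ : ℝ, 0 < μ →
        ∀ u : GraphFun G, IsGroundState p G μ u →
          C⁻¹ * μ ^ (2 * ((p - 2) / (6 - p))) ≤ μ⁻¹ * (lpG p G u - kinG G u) ∧
          μ⁻¹ * (lpG p G u - kinG G u) ≤ C * μ ^ (2 * ((p - 2) / (6 - p))) := by
  set β := (p - 2) / (6 - p)
  have hs : 0 < trialScale p ^ 2 := pow_pos (trialScale_pos (by linarith)) 2
  set C := max ((512 / p) ^ β) (trialScale p ^ 2)⁻¹
  refine ⟨C, lt_max_of_lt_right (inv_pos.2 hs), fun G hm μ hμ u hu => ?_⟩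
  have hμβ : μ ^ (1 + 2 * β) = μ * μ ^ (2 * β) := by rw [Real.rpow_add hμ, Real.rpow_one]
  have hE := energyG_le_of_isGroundState hp₁ hp₂ hm hμ hu
  have hP := lpG_le_of_energyG_nonpos hp₁ hp₂ hm hu.1
    (hE.trans (mul_nonpos_of_nonpos_of_nonneg (neg_nonpos.2 (by positivity)) (by positivity)))
  rw [hu.2.1, hμβ] at hP
  rw [energyG, hμβ] at hE
  have hK := kinG_nonneg u
  have hpP : 1 / p * lpG p G u ≤ 1 / 2 * lpG p G u :=
    mul_le_mul_of_nonneg_right (one_div_le_one_div_of_le two_pos hp₁.le) (lpG_nonneg p u)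
  constructor
  · rw [le_inv_mul_iff₀ hμ]
    calc μ * (C⁻¹ * μ ^ (2 * β)) ≤ μ * (trialScale p ^ 2 * μ ^ (2 * β)) := by
          gcongr
          exact inv_le_of_inv_le₀ hs (le_max_right _ _)
      _ ≤ lpG p G u - kinG G u := by linarith
  · rw [inv_mul_le_iff₀ hμ]
    calc lpG p G u - kinG G u ≤ (512 / p) ^ β * (μ * μ ^ (2 * β)) := by linarith
      _ ≤ μ * (C * μ ^ (2 * β)) := by
          rw [mul_left_comm]
          gcongr
          exact le_max_left _ _
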